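/- Let (X, 𝒜, μ) be a finite complete measure space and γ a maximal monotone graph in ℝ × ℝ with dom(γ) = ℝ and (0,0) ∈ γ. Suppose (xₙ) ⊂ L⁰(μ), (yₙ) ⊂ L¹(μ) satisfy (xₙ, yₙ) ∈ γ μ-a.e. and there are constants N₁, N₂ with ∫ xₙ yₙ dμ ≤ N₁ + N₂ ∫ |yₙ| dμ for all n. Then (yₙ) is relatively weakly sequentially compact in L¹(μ). -/

import Mathlib

open MeasureTheory Filter Topology ENNReal NNReal

section Aux

lemma cauchySeq_of_approx (a : ℕ → ℝ)
    (h : ∀ ε > (0:ℝ), ∃ b : ℕ → ℝ, CauchySeq b ∧ ∀ n, |a n - b n| ≤ ε) : CauchySeq a := by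
  rw [Metric.cauchySeq_iff]
  intro ε hε
  obtain ⟨b, hb, hab⟩ := h (ε/4) (by linarith)
  rw [Metric.cauchySeq_iff] at hb
  obtain ⟨N, hN⟩ := hb (ε/4) (by linarith)
  refine ⟨N, fun m hm n hn => ?_⟩
  have h1 := hab m; have h2 := hab n
  have h3 := hN m hm n hn
  rw [Real.dist_eq] at h3 ⊢
  have : |a m - a n| ≤ |a m - b m| + |b m - b n| + |b n - a n| := by
    calc |a m - a n| = |(a m - b m) + (b m - b n) + (b n - a n)| := by ring_nf
      _ ≤ _ := by
        refine (abs_add_le _ _).trans ?_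
        gcongr
        exact abs_add_le _ _
  rw [abs_sub_comm (b n) (a n)] at this
  linarith

end Aux

section Hilbert
variable {E : Type*} [NormedAddCommGroup E] [InnerProductSpace ℝ E] [CompleteSpace E]

local notation "⟪" x ", " y "⟫" => @inner ℝ _ _ x y

lemma weak_compact_family (u : ℕ → ℕ → E) (C : ℕ → ℝ) (hu : ∀ k n, ‖u k n‖ ≤ C k) :
    ∃ ψ : ℕ → ℕ, StrictMono ψ ∧ ∀ k, ∃ w : E,
      ∀ v : E, Tendsto (fun n => (⟪u k (ψ n), v⟫ : ℝ)) atTop (𝓝 ⟪w, v⟫) := by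
  classical
  have hC : ∀ k, 0 ≤ C k := fun k => (norm_nonneg _).trans (hu k 0)
  set I := ℕ × ℕ × ℕ
  set s : Set (I → ℝ) := Set.univ.pi
    (fun i => Set.Icc (-(C i.1 * C i.2.1)) (C i.1 * C i.2.1)) with hs
  have hscomp : IsCompact s := isCompact_univ_pi (fun i => isCompact_Icc)
  set a : ℕ → I → ℝ := fun n i => ⟪u i.1 n, u i.2.1 i.2.2⟫ with ha
  have hmem : ∀ n, a n ∈ s := by
    intro n i _
    have h1 : |(⟪u i.1 n, u i.2.1 i.2.2⟫ : ℝ)| ≤ C i.1 * C i.2.1 :=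
      (abs_real_inner_le_norm _ _).trans
        (mul_le_mul (hu _ _) (hu _ _) (norm_nonneg _) (hC _))
    exact abs_le.mp h1
  obtain ⟨L, -, ψ, hψ, hconv⟩ := hscomp.isSeqCompact (fun n => hmem n)
  rw [tendsto_pi_nhds] at hconv
  refine ⟨ψ, hψ, fun k => ?_⟩
  set S : Submodule ℝ E := (Submodule.span ℝ (⋃ k', Set.range (u k'))).topologicalClosure with hSdef
  have hSclosed : IsClosed (S : Set E) := Submodule.isClosed_topologicalClosure _
  haveI : CompleteSpace S := hSclosed.completeSpace_coe
  have huS : ∀ k' m, u k' m ∈ S := fun k' m =>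
    Submodule.le_topologicalClosure _
      (Submodule.subset_span (Set.mem_iUnion.2 ⟨k', Set.mem_range_self m⟩))
  have hspan : ∀ p ∈ Submodule.span ℝ (⋃ k', Set.range (u k')),
      ∃ c : ℝ, Tendsto (fun n => (⟪u k (ψ n), p⟫ : ℝ)) atTop (𝓝 c) := by
    intro p hp
    induction hp using Submodule.span_induction with
    | mem x hx =>
        obtain ⟨_, ⟨k', rfl⟩, m, rfl⟩ := hx
        exact ⟨L (k, k', m), hconv (k, k', m)⟩
    | zero => exact ⟨0, by simp⟩
    | add x y _ _ hx hy =>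
        obtain ⟨cx, hcx⟩ := hx; obtain ⟨cy, hcy⟩ := hy
        exact ⟨cx + cy, by simpa [inner_add_right] using hcx.add hcy⟩
    | smul r x _ hx =>
        obtain ⟨cx, hcx⟩ := hx
        exact ⟨r * cx, by simpa [real_inner_smul_right] using hcx.const_mul r⟩
  have hcauchy : ∀ v : E, ∃ c : ℝ, Tendsto (fun n => (⟪u k (ψ n), v⟫ : ℝ)) atTop (𝓝 c) := by
    intro v
    set vS : E := (S.orthogonalProjectionOnto v : E) with hvS
    have hperp : v - vS ∈ Sᗮ := Submodule.sub_starProjection_mem_orthogonal v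
    have hsplit : ∀ n, (⟪u k (ψ n), v⟫ : ℝ) = ⟪u k (ψ n), vS⟫ := by
      intro n
      have : (⟪u k (ψ n), v - vS⟫ : ℝ) = 0 :=
        Submodule.inner_right_of_mem_orthogonal (huS k (ψ n)) hperp
      have h2 : (⟪u k (ψ n), v⟫ : ℝ) - ⟪u k (ψ n), vS⟫ = 0 := by
        rw [← inner_sub_right]; exact this
      linarith
    have hvSS : vS ∈ S := SetLike.coe_mem _
    have hCS : CauchySeq (fun n => (⟪u k (ψ n), vS⟫ : ℝ)) := by
      apply cauchySeq_of_approx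
      intro ε hε
      have hd : vS ∈ closure ((Submodule.span ℝ (⋃ k', Set.range (u k')) : Submodule ℝ E) : Set E) := hvSS
      have hpos : 0 < ε / (C k + 1) := div_pos hε (by linarith [hC k])
      obtain ⟨p, hp, hpd⟩ := Metric.mem_closure_iff.mp hd _ hpos
      obtain ⟨c, hc⟩ := hspan p hp
      refine ⟨fun n => ⟪u k (ψ n), p⟫, hc.cauchySeq, fun n => ?_⟩
      have : (⟪u k (ψ n), vS⟫ : ℝ) - ⟪u k (ψ n), p⟫ = ⟪u k (ψ n), vS - p⟫ := by
        rw [inner_sub_right]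
      rw [this]
      calc |(⟪u k (ψ n), vS - p⟫ : ℝ)| ≤ ‖u k (ψ n)‖ * ‖vS - p‖ := abs_real_inner_le_norm _ _
        _ ≤ (C k) * (ε / (C k + 1)) := by
            apply mul_le_mul (hu k _) _ (norm_nonneg _) (hC k)
            rw [← dist_eq_norm]; exact le_of_lt hpd
        _ ≤ ε := by
            rw [div_eq_inv_mul, ← mul_assoc]
            have h1 : C k * (C k + 1)⁻¹ ≤ 1 := by
              rw [mul_inv_le_iff₀ (by linarith [hC k] : (0:ℝ) < C k + 1)]; linarith [hC k]
            nlinarith [h1, le_of_lt hε]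
    obtain ⟨c, hc⟩ := cauchySeq_tendsto_of_complete hCS
    exact ⟨c, by simpa only [hsplit] using hc⟩
  choose l hl using hcauchy
  have hladd : ∀ v v', l (v + v') = l v + l v' := by
    intro v v'
    refine tendsto_nhds_unique ?_ ((hl v).add (hl v'))
    simpa [inner_add_right] using hl (v + v')
  have hlsmul : ∀ (r : ℝ) v, l (r • v) = r * l v := by
    intro r v
    refine tendsto_nhds_unique ?_ ((hl v).const_mul r)
    simpa [real_inner_smul_right] using hl (r • v)
  have hlbd : ∀ v, |l v| ≤ C k * ‖v‖ := by
    intro v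
    have : Tendsto (fun n => |(⟪u k (ψ n), v⟫ : ℝ)|) atTop (𝓝 |l v|) := (hl v).abs
    refine le_of_tendsto this (Eventually.of_forall fun n => ?_)
    exact (abs_real_inner_le_norm _ _).trans
      (mul_le_mul_of_nonneg_right (hu k _) (norm_nonneg _))
  let Lmap : E →ₗ[ℝ] ℝ :=
    { toFun := l, map_add' := hladd, map_smul' := fun r v => by simpa using hlsmul r v }
  let Lc : E →L[ℝ] ℝ := LinearMap.mkContinuous Lmap (C k)
    (fun v => by simpa [Real.norm_eq_abs, Lmap] using hlbd v)
  refine ⟨(InnerProductSpace.toDual ℝ E).symm Lc, fun v => ?_⟩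
  have : (⟪(InnerProductSpace.toDual ℝ E).symm Lc, v⟫ : ℝ) = Lc v :=
    InnerProductSpace.toDual_symm_apply
  rw [this]
  exact hl v
end Hilbert

section Gamma

lemma gamma_pointwise (γ : Set (ℝ × ℝ))
    (hmono : ∀ p ∈ γ, ∀ q ∈ γ, 0 ≤ (p.1 - q.1) * (p.2 - q.2))
    (hdom : ∀ a : ℝ, ∃ b : ℝ, (a, b) ∈ γ) (h0 : ((0 : ℝ), (0 : ℝ)) ∈ γ)
    (s : ℝ) (hs : 0 < s) :
    ∃ Cs : ℝ, 0 ≤ Cs ∧ ∀ x y : ℝ, (x, y) ∈ γ → 0 ≤ x * y ∧ s * |y| ≤ x * y + Cs := by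
  obtain ⟨bp, hbp⟩ := hdom s
  obtain ⟨bm, hbm⟩ := hdom (-s)
  have hbp0 : 0 ≤ bp := by
    have := hmono (s, bp) hbp (0, 0) h0; simp at this; nlinarith
  have hbm0 : bm ≤ 0 := by
    have := hmono (-s, bm) hbm (0, 0) h0; simp at this; nlinarith
  refine ⟨s * (bp - bm), by nlinarith, fun x y h => ?_⟩
  have h1 := hmono (x, y) h (0, 0) h0
  simp only [sub_zero] at h1
  refine ⟨h1, ?_⟩
  rcases le_or_gt 0 y with hy | hy
  · rw [abs_of_nonneg hy]
    have h2 := hmono (x, y) h (s, bp) hbp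
    simp only at h2
    rcases le_or_gt y bp with h3 | h3
    · nlinarith
    · have hx : 0 ≤ x - s := by nlinarith
      nlinarith
  · rw [abs_of_neg hy]
    have h2 := hmono (x, y) h (-s, bm) hbm
    simp only [sub_neg_eq_add] at h2
    rcases le_or_gt bm y with h3 | h3
    · nlinarith
    · have hx : x + s ≤ 0 := by nlinarith
      nlinarith

noncomputable def trunc (k : ℕ) (r : ℝ) : ℝ := max (-((k : ℝ) + 1)) (min ((k : ℝ) + 1) r)

lemma trunc_abs_le (k : ℕ) (r : ℝ) : |trunc k r| ≤ (k : ℝ) + 1 := by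
  rw [abs_le, trunc]
  constructor
  · exact le_max_left _ _
  · exact max_le (by linarith [Nat.cast_nonneg (α := ℝ) k]) (min_le_left _ _)

lemma trunc_continuous (k : ℕ) : Continuous (trunc k) :=
  continuous_const.max (continuous_const.min continuous_id)

lemma trunc_eq_self {k : ℕ} {r : ℝ} (h : |r| ≤ (k : ℝ) + 1) : trunc k r = r := by
  rw [abs_le] at h
  rw [trunc, min_eq_right h.2, max_eq_right h.1]

lemma abs_sub_trunc_le {k : ℕ} {r : ℝ} : |r - trunc k r| ≤ |r| := by
  have hc0 : (0:ℝ) ≤ (k : ℝ) + 1 := by positivity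
  rcases le_total r (-((k : ℝ) + 1)) with h | h
  · have ht : trunc k r = -((k : ℝ) + 1) := by
      rw [trunc, min_eq_right (by linarith), max_eq_left (by linarith)]
    rw [ht, abs_of_nonpos (by linarith), abs_of_nonpos (by linarith)]; linarith
  rcases le_total ((k : ℝ) + 1) r with h2 | h2
  · have ht : trunc k r = (k : ℝ) + 1 := by
      rw [trunc, min_eq_left h2, max_eq_right (by linarith)]
    rw [ht, abs_of_nonneg (by linarith), abs_of_nonneg (by linarith)]; linarith
  · rw [trunc_eq_self (abs_le.mpr ⟨h, h2⟩)]; simpa using abs_nonneg r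

lemma key_pointwise {x y s Cs : ℝ} (hs : 0 < s) (hCs : 0 ≤ Cs)
    (h1 : 0 ≤ x * y) (h2 : s * |y| ≤ x * y + Cs) (k : ℕ) :
    |y - trunc k y| ≤ x * y / s + Cs / (s * ((k : ℝ) + 1)) * |y| := by
  set c : ℝ := (k : ℝ) + 1 with hc
  have hc0 : (0:ℝ) < c := by positivity
  rcases le_or_gt (|y|) c with h | h
  · rw [trunc_eq_self h]
    simp only [sub_self, abs_zero]
    positivity
  · have hle : |y - trunc k y| ≤ |y| := abs_sub_trunc_le
    have key : |y - trunc k y| ≤ (c * (x * y) + Cs * |y|) / (s * c) := by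
      rw [le_div_iff₀ (by positivity)]
      have h4 : |y - trunc k y| * (s * c) ≤ |y| * (s * c) :=
        mul_le_mul_of_nonneg_right hle (by positivity)
      have h5 : c * (s * |y|) ≤ c * (x * y + Cs) := mul_le_mul_of_nonneg_left h2 hc0.le
      have h6 : Cs * c ≤ Cs * |y| := mul_le_mul_of_nonneg_left h.le hCs
      nlinarith
    refine key.trans (le_of_eq ?_)
    field_simp

end Gamma

set_option maxHeartbeats 1000000 in
/-- Let `μ` be a finite complete measure and `γ` a maximal monotone graph in
`ℝ × ℝ` with full domain and `(0,0) ∈ γ`. If `(xₙ) ⊂ L⁰(μ)`, `(yₙ) ⊂ L¹(μ)`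
satisfy `(xₙ, yₙ) ∈ γ` a.e. and `∫ xₙ yₙ dμ ≤ N₁ + N₂ ∫ |yₙ| dμ` for all `n`,
then `(yₙ)` is relatively weakly sequentially compact in `L¹(μ)`. -/
theorem stmt6 {X : Type*} [MeasurableSpace X] (μ : Measure X) [IsFiniteMeasure μ]
    [μ.IsComplete]
    (γ : Set (ℝ × ℝ))
    (hmono : ∀ p ∈ γ, ∀ q ∈ γ, 0 ≤ (p.1 - q.1) * (p.2 - q.2))
    (hmax : ∀ B : Set (ℝ × ℝ), γ ⊆ B →
      (∀ p ∈ B, ∀ q ∈ B, 0 ≤ (p.1 - q.1) * (p.2 - q.2)) → B = γ)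
    (hdom : ∀ a : ℝ, ∃ b : ℝ, (a, b) ∈ γ) (h0 : ((0 : ℝ), (0 : ℝ)) ∈ γ)
    (xn yn : ℕ → X → ℝ) (hxnm : ∀ n, Measurable (xn n))
    (hynint : ∀ n, Integrable (yn n) μ)
    (hγ : ∀ n, ∀ᵐ ω ∂μ, (xn n ω, yn n ω) ∈ γ)
    (hprodint : ∀ n, Integrable (fun ω => xn n ω * yn n ω) μ)
    (N₁ N₂ : ℝ)
    (hbd : ∀ n, ∫ ω, xn n ω * yn n ω ∂μ ≤ N₁ + N₂ * ∫ ω, |yn n ω| ∂μ) :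
    ∀ φ : ℕ → ℕ, StrictMono φ → ∃ ψ : ℕ → ℕ, StrictMono ψ ∧
      ∃ z : X → ℝ, Integrable z μ ∧
        ∀ g : X → ℝ, Measurable g → (∃ B : ℝ, ∀ ω, ‖g ω‖ ≤ B) →
          Tendsto (fun n => ∫ ω, yn (φ (ψ n)) ω * g ω ∂μ) atTop
            (nhds (∫ ω, z ω * g ω ∂μ)) := by
  intro φ hφ
  set f : ℕ → X → ℝ := fun n => yn (φ n) with hfdef
  have hfint : ∀ n, Integrable (f n) μ := fun n => hynint (φ n)
  have hfprod : ∀ n, Integrable (fun ω => xn (φ n) ω * f n ω) μ := fun n => hprodint (φ n)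
  have hfabs : ∀ n, Integrable (fun ω => |f n ω|) μ := fun n => (hfint n).abs
  have hfγ : ∀ n, ∀ᵐ ω ∂μ, (xn (φ n) ω, f n ω) ∈ γ := fun n => hγ (φ n)
  have hfbd : ∀ n, ∫ ω, xn (φ n) ω * f n ω ∂μ ≤ N₁ + N₂ * ∫ ω, |f n ω| ∂μ := fun n => hbd (φ n)
  have hxynn : ∀ n, 0 ≤ ∫ ω, xn (φ n) ω * f n ω ∂μ := by
    intro n
    apply integral_nonneg_of_ae
    obtain ⟨C₀, hC₀0, hkey⟩ := gamma_pointwise γ hmono hdom h0 1 one_pos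
    exact (hfγ n).mono (fun ω hω => (hkey _ _ hω).1)
  have habs0 : ∀ n, 0 ≤ ∫ ω, |f n ω| ∂μ := fun n => integral_nonneg fun ω => abs_nonneg _
  -- uniform L¹ bound
  obtain ⟨C₀, hC₀0, hkey₀⟩ := gamma_pointwise γ hmono hdom h0 (|N₂| + 1) (by positivity)
  set M : ℝ := N₁ + C₀ * (μ Set.univ).toReal with hMdef
  have hMb : ∀ n, ∫ ω, |f n ω| ∂μ ≤ M := by
    intro n
    have step : (|N₂| + 1) * ∫ ω, |f n ω| ∂μ
        ≤ (∫ ω, xn (φ n) ω * f n ω ∂μ) + C₀ * (μ Set.univ).toReal := by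
      rw [← integral_const_mul]
      have he : ∫ ω, (xn (φ n) ω * f n ω + C₀) ∂μ
          = (∫ ω, xn (φ n) ω * f n ω ∂μ) + C₀ * (μ Set.univ).toReal := by
        rw [integral_add (hfprod n) (integrable_const _), integral_const, smul_eq_mul, mul_comm]; rfl
      rw [← he]
      apply integral_mono_ae ((hfabs n).const_mul _) ((hfprod n).add (integrable_const _))
      exact (hfγ n).mono fun ω hω => (hkey₀ _ _ hω).2
    have h2 : N₂ * ∫ ω, |f n ω| ∂μ ≤ |N₂| * ∫ ω, |f n ω| ∂μ :=
      mul_le_mul_of_nonneg_right (le_abs_self N₂) (habs0 n)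
    have := hfbd n
    linarith
  have hM0 : 0 ≤ M := le_trans (habs0 0) (hMb 0)
  set K : ℝ := N₁ + |N₂| * M with hKdef
  have hKb : ∀ n, ∫ ω, xn (φ n) ω * f n ω ∂μ ≤ K := by
    intro n
    have h2 : N₂ * ∫ ω, |f n ω| ∂μ ≤ |N₂| * M := by
      have ha := hMb n
      have hb := habs0 n
      nlinarith [le_abs_self N₂, abs_nonneg N₂]
    have := hfbd n
    linarith
  have hK0 : 0 ≤ K := (hxynn 0).trans (hKb 0)
  -- truncations
  have hTm : ∀ k n, AEStronglyMeasurable (fun ω => trunc k (f n ω)) μ := fun k n =>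
    (trunc_continuous k).comp_aestronglyMeasurable (hfint n).1
  have hT2 : ∀ k n, MemLp (fun ω => trunc k (f n ω)) 2 μ := fun k n =>
    MemLp.of_bound (hTm k n) _
      (Eventually.of_forall fun ω => by
        simpa [Real.norm_eq_abs] using trunc_abs_le k (f n ω))
  have hTint : ∀ k n, Integrable (fun ω => trunc k (f n ω)) μ := fun k n =>
    (hT2 k n).integrable one_le_two
  have hdiffint : ∀ k n, Integrable (fun ω => |f n ω - trunc k (f n ω)|) μ := fun k n =>
    ((hfint n).sub (hTint k n)).abs
  -- key uniform truncation estimate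
  have htrunc : ∀ ε : ℝ, 0 < ε → ∃ k₀ : ℕ, ∀ k, k₀ ≤ k → ∀ n,
      ∫ ω, |f n ω - trunc k (f n ω)| ∂μ ≤ ε := by
    intro ε hε
    set s : ℝ := 2 * (K + 1) / ε with hsdef
    have hs0 : 0 < s := by positivity
    obtain ⟨Cs, hCs0, hkey⟩ := gamma_pointwise γ hmono hdom h0 s hs0
    refine ⟨Nat.ceil (2 * Cs * M / (s * ε)), fun k hk n => ?_⟩
    have hbound : ∫ ω, |f n ω - trunc k (f n ω)| ∂μ
        ≤ K / s + Cs / (s * ((k:ℝ)+1)) * M := by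
      have hm2 : ∫ ω, |f n ω - trunc k (f n ω)| ∂μ
          ≤ ∫ ω, (xn (φ n) ω * f n ω / s + Cs / (s * ((k:ℝ)+1)) * |f n ω|) ∂μ := by
        apply integral_mono_ae (hdiffint k n)
          (((hfprod n).div_const s).add ((hfabs n).const_mul _))
        exact (hfγ n).mono fun ω hω =>
          key_pointwise hs0 hCs0 (hkey _ _ hω).1 (hkey _ _ hω).2 k
      rw [integral_add ((hfprod n).div_const s) ((hfabs n).const_mul _),
        integral_div, integral_const_mul] at hm2
      have t1 : (∫ ω, xn (φ n) ω * f n ω ∂μ) / s ≤ K / s :=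
        div_le_div_of_nonneg_right (hKb n) hs0.le
      have t2 : Cs / (s * ((k:ℝ)+1)) * (∫ ω, |f n ω| ∂μ) ≤ Cs / (s * ((k:ℝ)+1)) * M :=
        mul_le_mul_of_nonneg_left (hMb n) (by positivity)
      linarith
    have hK1 : K / s ≤ ε / 2 := by
      have he : ε / 2 * s = K + 1 := by rw [hsdef]; field_simp
      rw [div_le_iff₀ hs0, he]; linarith
    have hK2 : Cs / (s * ((k:ℝ)+1)) * M ≤ ε / 2 := by
      have hk1 : 2 * Cs * M / (s * ε) ≤ (k:ℝ) + 1 := by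
        calc 2 * Cs * M / (s * ε) ≤ (Nat.ceil (2 * Cs * M / (s * ε)) : ℝ) := Nat.le_ceil _
          _ ≤ (k:ℝ) := Nat.cast_le.mpr hk
          _ ≤ (k:ℝ) + 1 := by linarith
      have h2 : 2 * Cs * M ≤ ((k:ℝ)+1) * (s * ε) := (div_le_iff₀ (by positivity)).mp hk1
      rw [div_mul_eq_mul_div, div_le_iff₀ (by positivity)]
      nlinarith
    linarith
  -- L² elements
  set u : ℕ → ℕ → Lp ℝ 2 μ := fun k n => (hT2 k n).toLp _ with hudef
  set Cb : ℕ → ℝ := fun k =>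
    (measureUnivNNReal μ : ℝ) ^ ((2:ℝ≥0∞).toReal⁻¹) * ((k:ℝ)+1) with hCbdef
  have hub : ∀ k n, ‖u k n‖ ≤ Cb k := by
    intro k n
    apply Lp.norm_le_of_ae_bound (by positivity)
    filter_upwards [(hT2 k n).coeFn_toLp] with ω hω
    rw [hω]
    simpa [Real.norm_eq_abs] using trunc_abs_le k (f n ω)
  obtain ⟨ψ, hψ, hwk⟩ := weak_compact_family u Cb hub
  choose w hw using hwk
  -- inner products are integrals
  have hinner : ∀ (h : Lp ℝ 2 μ) (g' : X → ℝ) (hg' : MemLp g' 2 μ),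
      (inner ℝ h (hg'.toLp g') : ℝ) = ∫ ω, (h : X → ℝ) ω * g' ω ∂μ := by
    intro h g' hg'
    rw [L2.inner_def]
    apply integral_congr_ae
    filter_upwards [hg'.coeFn_toLp] with ω hω
    rw [hω]
    simp [RCLike.inner_apply, conj_trivial, mul_comm]
  have hconv2 : ∀ k (g' : X → ℝ) (hg' : MemLp g' 2 μ),
      Tendsto (fun n => ∫ ω, trunc k (f (ψ n) ω) * g' ω ∂μ) atTop
        (𝓝 (∫ ω, (w k : X → ℝ) ω * g' ω ∂μ)) := by
    intro k g' hg'
    have h1 := hw k (hg'.toLp g')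
    rw [hinner (w k) g' hg'] at h1
    refine h1.congr fun n => ?_
    rw [hinner (u k (ψ n)) g' hg']
    apply integral_congr_ae
    filter_upwards [(hT2 k (ψ n)).coeFn_toLp] with ω hω
    rw [hω]
  -- integrability of w k
  have hwint : ∀ k, Integrable ((w k : X → ℝ)) μ := fun k =>
    (Lp.memLp (w k)).integrable one_le_two
  -- the w k are uniformly L¹-Cauchy
  have hWdiff : ∀ ε : ℝ, 0 < ε → ∃ k₀ : ℕ, ∀ k, k₀ ≤ k → ∀ j, k₀ ≤ j →
      ∫ ω, |(w k : X → ℝ) ω - (w j : X → ℝ) ω| ∂μ ≤ ε := by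
    intro ε hε
    obtain ⟨k₀, hk₀⟩ := htrunc (ε/2) (by linarith)
    refine ⟨k₀, fun k hk j hj => ?_⟩
    set d : X → ℝ := (Lp.aestronglyMeasurable (w k - w j)).mk _ with hddef
    have hdm : StronglyMeasurable d := (Lp.aestronglyMeasurable (w k - w j)).stronglyMeasurable_mk
    have hdae : (w k - w j : Lp ℝ 2 μ) =ᵐ[μ] d := (Lp.aestronglyMeasurable (w k - w j)).ae_eq_mk
    set g' : X → ℝ := fun ω => if 0 ≤ d ω then 1 else -1 with hg'def
    have hg'm : Measurable g' :=
      Measurable.ite (measurableSet_le measurable_const hdm.measurable)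
        measurable_const measurable_const
    have hg'b : ∀ ω, ‖g' ω‖ ≤ 1 := by
      intro ω; rw [hg'def]; dsimp only; split <;> simp
    have hg'2 : MemLp g' 2 μ :=
      MemLp.of_bound hg'm.aestronglyMeasurable 1 (Eventually.of_forall hg'b)
    have hTgint : ∀ i n, Integrable (fun ω => trunc i (f n ω) * g' ω) μ := by
      intro i n
      have := (hTint i n).bdd_mul hg'm.aestronglyMeasurable (Eventually.of_forall hg'b)
      refine this.congr (Eventually.of_forall fun ω => mul_comm _ _)
    have hseq : ∀ n, |(∫ ω, trunc k (f (ψ n) ω) * g' ω ∂μ)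
        - ∫ ω, trunc j (f (ψ n) ω) * g' ω ∂μ| ≤ ε := by
      intro n
      rw [← integral_sub (hTgint k _) (hTgint j _)]
      calc |∫ ω, (trunc k (f (ψ n) ω) * g' ω - trunc j (f (ψ n) ω) * g' ω) ∂μ|
          ≤ ∫ ω, |trunc k (f (ψ n) ω) * g' ω - trunc j (f (ψ n) ω) * g' ω| ∂μ := by
            simpa [Real.norm_eq_abs] using
              norm_integral_le_integral_norm
                (fun ω => trunc k (f (ψ n) ω) * g' ω - trunc j (f (ψ n) ω) * g' ω)
        _ ≤ ∫ ω, (|f (ψ n) ω - trunc k (f (ψ n) ω)| + |f (ψ n) ω - trunc j (f (ψ n) ω)|) ∂μ := by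
            apply integral_mono ((hTgint k _).sub (hTgint j _)).abs
              ((hdiffint k _).add (hdiffint j _))
            intro ω
            simp only [Pi.sub_apply, Pi.add_apply]
            have hb := hg'b ω
            rw [Real.norm_eq_abs] at hb
            have : trunc k (f (ψ n) ω) * g' ω - trunc j (f (ψ n) ω) * g' ω
                = (trunc k (f (ψ n) ω) - trunc j (f (ψ n) ω)) * g' ω := by ring
            rw [this, abs_mul]
            have h1 : |trunc k (f (ψ n) ω) - trunc j (f (ψ n) ω)| * |g' ω|
                ≤ |trunc k (f (ψ n) ω) - trunc j (f (ψ n) ω)| := by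
              nlinarith [abs_nonneg (trunc k (f (ψ n) ω) - trunc j (f (ψ n) ω)), abs_nonneg (g' ω)]
            refine h1.trans ?_
            have : trunc k (f (ψ n) ω) - trunc j (f (ψ n) ω)
                = -(f (ψ n) ω - trunc k (f (ψ n) ω)) + (f (ψ n) ω - trunc j (f (ψ n) ω)) := by ring
            rw [this]
            exact (abs_add_le _ _).trans (by rw [abs_neg])
        _ = (∫ ω, |f (ψ n) ω - trunc k (f (ψ n) ω)| ∂μ)
            + ∫ ω, |f (ψ n) ω - trunc j (f (ψ n) ω)| ∂μ :=
            integral_add (hdiffint k _) (hdiffint j _)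
        _ ≤ ε/2 + ε/2 := add_le_add (hk₀ k hk _) (hk₀ j hj _)
        _ = ε := by ring
    have hlim : Tendsto (fun n => (∫ ω, trunc k (f (ψ n) ω) * g' ω ∂μ)
        - ∫ ω, trunc j (f (ψ n) ω) * g' ω ∂μ) atTop
        (𝓝 ((∫ ω, (w k : X → ℝ) ω * g' ω ∂μ) - ∫ ω, (w j : X → ℝ) ω * g' ω ∂μ)) :=
      (hconv2 k g' hg'2).sub (hconv2 j g' hg'2)
    have hlimb : |(∫ ω, (w k : X → ℝ) ω * g' ω ∂μ) - ∫ ω, (w j : X → ℝ) ω * g' ω ∂μ| ≤ ε :=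
      le_of_tendsto hlim.abs (Eventually.of_forall hseq)
    have hwgint : ∀ i, Integrable (fun ω => (w i : X → ℝ) ω * g' ω) μ := by
      intro i
      have := (hwint i).bdd_mul hg'm.aestronglyMeasurable (Eventually.of_forall hg'b)
      exact this.congr (Eventually.of_forall fun ω => mul_comm _ _)
    have e1 : (∫ ω, (w k : X → ℝ) ω * g' ω ∂μ) - (∫ ω, (w j : X → ℝ) ω * g' ω ∂μ)
        = ∫ ω, |(w k : X → ℝ) ω - (w j : X → ℝ) ω| ∂μ := by
      rw [← integral_sub (hwgint k) (hwgint j)]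
      apply integral_congr_ae
      filter_upwards [hdae, Lp.coeFn_sub (w k) (w j)] with ω h1 h2
      simp only [Pi.sub_apply] at h2
      have h3 : (w k : X → ℝ) ω * g' ω - (w j : X → ℝ) ω * g' ω
          = ((w k : X → ℝ) ω - (w j : X → ℝ) ω) * g' ω := by ring
      rw [h3, ← h2, h1]
      have h4 : d ω * g' ω = |d ω| := by
        rw [hg'def]; dsimp only
        rcases le_or_gt 0 (d ω) with h | h
        · rw [if_pos h, abs_of_nonneg h, mul_one]
        · rw [if_neg (not_le.mpr h), abs_of_neg h]; ring
      rw [h4, ← h1, h2]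
    rw [e1] at hlimb
    exact (le_abs_self _).trans hlimb
  -- lift to L¹ and take the limit
  have hw1 : ∀ k, MemLp ((w k : X → ℝ)) 1 μ := fun k =>
    (Lp.memLp (w k)).mono_exponent one_le_two
  set W : ℕ → Lp ℝ 1 μ := fun k => (hw1 k).toLp _ with hWdef
  have hWnorm : ∀ k j, ‖W k - W j‖ = ∫ ω, |(w k : X → ℝ) ω - (w j : X → ℝ) ω| ∂μ := by
    intro k j
    rw [L1.norm_eq_integral_norm]
    apply integral_congr_ae
    filter_upwards [Lp.coeFn_sub (W k) (W j), (hw1 k).coeFn_toLp, (hw1 j).coeFn_toLp]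
      with ω h1 h2 h3
    rw [Real.norm_eq_abs, h1]
    simp only [Pi.sub_apply]
    rw [h2, h3]
  have hWc : CauchySeq W := by
    rw [Metric.cauchySeq_iff]
    intro ε hε
    obtain ⟨k₀, hk₀⟩ := hWdiff (ε/2) (by linarith)
    refine ⟨k₀, fun k hk j hj => ?_⟩
    rw [dist_eq_norm, hWnorm k j]
    exact lt_of_le_of_lt (hk₀ k hk j hj) (by linarith)
  obtain ⟨Z, hZ⟩ := cauchySeq_tendsto_of_complete hWc
  have hZint : Integrable (fun ω => (Z : X → ℝ) ω) μ := L1.integrable_coeFn Z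
  refine ⟨ψ, hψ, fun ω => (Z : X → ℝ) ω, hZint, ?_⟩
  rintro g hgm ⟨B, hgB⟩
  set B' : ℝ := max B 0 with hB'def
  have hgB' : ∀ ω, ‖g ω‖ ≤ B' := fun ω => (hgB ω).trans (le_max_left _ _)
  have hB'0 : 0 ≤ B' := le_max_right _ _
  have hg2 : MemLp g 2 μ := MemLp.of_bound hgm.aestronglyMeasurable B' (Eventually.of_forall hgB')
  have hfg : ∀ n, Integrable (fun ω => f n ω * g ω) μ := by
    intro n
    have := (hfint n).bdd_mul hgm.aestronglyMeasurable (Eventually.of_forall hgB')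
    exact this.congr (Eventually.of_forall fun ω => mul_comm _ _)
  have hTg : ∀ k n, Integrable (fun ω => trunc k (f n ω) * g ω) μ := by
    intro k n
    have := (hTint k n).bdd_mul hgm.aestronglyMeasurable (Eventually.of_forall hgB')
    exact this.congr (Eventually.of_forall fun ω => mul_comm _ _)
  have hwg : ∀ k, Integrable (fun ω => (w k : X → ℝ) ω * g ω) μ := by
    intro k
    have := (hwint k).bdd_mul hgm.aestronglyMeasurable (Eventually.of_forall hgB')
    exact this.congr (Eventually.of_forall fun ω => mul_comm _ _)
  have hZg : Integrable (fun ω => (Z : X → ℝ) ω * g ω) μ := by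
    have := hZint.bdd_mul hgm.aestronglyMeasurable (Eventually.of_forall hgB')
    exact this.congr (Eventually.of_forall fun ω => mul_comm _ _)
  have final : Tendsto (fun n => ∫ ω, f (ψ n) ω * g ω ∂μ) atTop
      (𝓝 (∫ ω, (Z : X → ℝ) ω * g ω ∂μ)) := by
    rw [Metric.tendsto_atTop]
    intro ε hε
    set δ : ℝ := ε / (4 * (B' + 1)) with hδdef
    have hδ0 : 0 < δ := by positivity
    obtain ⟨k₀, hk₀⟩ := htrunc δ hδ0
    obtain ⟨k₁, hk₁⟩ := Metric.tendsto_atTop.mp hZ δ hδ0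
    set k : ℕ := max k₀ k₁ with hkdef
    have hWZ : ‖W k - Z‖ ≤ δ := by
      have := hk₁ k (le_max_right _ _)
      rw [dist_eq_norm] at this
      exact this.le
    obtain ⟨N, hN⟩ := Metric.tendsto_atTop.mp (hconv2 k g hg2) δ hδ0
    refine ⟨N, fun n hn => ?_⟩
    have h1 : |(∫ ω, f (ψ n) ω * g ω ∂μ) - ∫ ω, trunc k (f (ψ n) ω) * g ω ∂μ| ≤ B' * δ := by
      rw [← integral_sub (hfg _) (hTg k _)]
      calc |∫ ω, (f (ψ n) ω * g ω - trunc k (f (ψ n) ω) * g ω) ∂μ|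
          ≤ ∫ ω, |f (ψ n) ω * g ω - trunc k (f (ψ n) ω) * g ω| ∂μ := by
            simpa [Real.norm_eq_abs] using
              norm_integral_le_integral_norm
                (fun ω => f (ψ n) ω * g ω - trunc k (f (ψ n) ω) * g ω)
        _ ≤ ∫ ω, |f (ψ n) ω - trunc k (f (ψ n) ω)| * B' ∂μ := by
            apply integral_mono ((hfg _).sub (hTg k _)).abs ((hdiffint k _).mul_const _)
            intro ω
            simp only [Pi.sub_apply, Pi.add_apply]
            have heq : f (ψ n) ω * g ω - trunc k (f (ψ n) ω) * g ω
                = (f (ψ n) ω - trunc k (f (ψ n) ω)) * g ω := by ring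
            rw [heq, abs_mul]
            have := hgB' ω
            rw [Real.norm_eq_abs] at this
            exact mul_le_mul_of_nonneg_left this (abs_nonneg _)
        _ = (∫ ω, |f (ψ n) ω - trunc k (f (ψ n) ω)| ∂μ) * B' := integral_mul_const _ _
        _ ≤ δ * B' := mul_le_mul_of_nonneg_right (hk₀ k (le_max_left _ _) _) hB'0
        _ = B' * δ := mul_comm _ _
    have h2 : |(∫ ω, trunc k (f (ψ n) ω) * g ω ∂μ) - ∫ ω, (w k : X → ℝ) ω * g ω ∂μ| < δ := by
      have := hN n hn
      rwa [Real.dist_eq] at this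
    have h3 : |(∫ ω, (w k : X → ℝ) ω * g ω ∂μ) - ∫ ω, (Z : X → ℝ) ω * g ω ∂μ| ≤ B' * δ := by
      have hnormWZ : ‖W k - Z‖ = ∫ ω, |(w k : X → ℝ) ω - (Z : X → ℝ) ω| ∂μ := by
        rw [L1.norm_eq_integral_norm]
        apply integral_congr_ae
        filter_upwards [Lp.coeFn_sub (W k) Z, (hw1 k).coeFn_toLp] with ω ha hb
        rw [Real.norm_eq_abs, ha]
        simp only [Pi.sub_apply]
        rw [hb]
      rw [← integral_sub (hwg k) hZg]
      calc |∫ ω, ((w k : X → ℝ) ω * g ω - (Z : X → ℝ) ω * g ω) ∂μ|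
          ≤ ∫ ω, |(w k : X → ℝ) ω * g ω - (Z : X → ℝ) ω * g ω| ∂μ := by
            simpa [Real.norm_eq_abs] using
              norm_integral_le_integral_norm
                (fun ω => (w k : X → ℝ) ω * g ω - (Z : X → ℝ) ω * g ω)
        _ ≤ ∫ ω, |(w k : X → ℝ) ω - (Z : X → ℝ) ω| * B' ∂μ := by
            apply integral_mono ((hwg k).sub hZg).abs (((hwint k).sub hZint).abs.mul_const _)
            intro ω
            simp only [Pi.sub_apply, Pi.add_apply]
            have heq : (w k : X → ℝ) ω * g ω - (Z : X → ℝ) ω * g ω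
                = ((w k : X → ℝ) ω - (Z : X → ℝ) ω) * g ω := by ring
            rw [heq, abs_mul]
            have := hgB' ω
            rw [Real.norm_eq_abs] at this
            exact mul_le_mul_of_nonneg_left this (abs_nonneg _)
        _ = (∫ ω, |(w k : X → ℝ) ω - (Z : X → ℝ) ω| ∂μ) * B' := integral_mul_const _ _
        _ ≤ δ * B' := by
            rw [← hnormWZ]
            exact mul_le_mul_of_nonneg_right hWZ hB'0
        _ = B' * δ := mul_comm _ _
    rw [Real.dist_eq]
    have htri : |(∫ ω, f (ψ n) ω * g ω ∂μ) - ∫ ω, (Z : X → ℝ) ω * g ω ∂μ|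
        ≤ |(∫ ω, f (ψ n) ω * g ω ∂μ) - ∫ ω, trunc k (f (ψ n) ω) * g ω ∂μ|
          + |(∫ ω, trunc k (f (ψ n) ω) * g ω ∂μ) - ∫ ω, (w k : X → ℝ) ω * g ω ∂μ|
          + |(∫ ω, (w k : X → ℝ) ω * g ω ∂μ) - ∫ ω, (Z : X → ℝ) ω * g ω ∂μ| := by
      have := abs_sub_abs_le_abs_sub (0:ℝ) (0:ℝ)
      calc |(∫ ω, f (ψ n) ω * g ω ∂μ) - ∫ ω, (Z : X → ℝ) ω * g ω ∂μ|
          = |((∫ ω, f (ψ n) ω * g ω ∂μ) - ∫ ω, trunc k (f (ψ n) ω) * g ω ∂μ)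
            + ((∫ ω, trunc k (f (ψ n) ω) * g ω ∂μ) - ∫ ω, (w k : X → ℝ) ω * g ω ∂μ)
            + ((∫ ω, (w k : X → ℝ) ω * g ω ∂μ) - ∫ ω, (Z : X → ℝ) ω * g ω ∂μ)| := by ring_nf
        _ ≤ _ := by
            refine (abs_add_le _ _).trans ?_
            gcongr
            exact abs_add_le _ _
    have hfinal : (2 * B' + 1) * δ < ε := by
      rw [hδdef]
      rw [div_eq_inv_mul, ← mul_assoc]
      have : (2 * B' + 1) * (4 * (B' + 1))⁻¹ < 1 := by
        rw [mul_inv_lt_iff₀ (by positivity)]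
        nlinarith
      nlinarith
    linarith
  exact final
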